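/- In any finite set X of alternatives, a stochastic choice dataset P is rationalizable by a probability distribution over the strict total orders of X if and only if it satisfies the Axiom of Revealed Stochastic Preference. -/

import Mathlib

/-!
Necessity is an averaging argument: `∑ᵢ P(Aᵢ, xᵢ)` is the `ν`-expectation of the number of
indices `i` such that `xᵢ` is ranked first in `Aᵢ`, so some order attains at least that number.

Sufficiency: index vectors by the pairs `(A, x)` with `x ∈ A ∈ 𝒜`, let `p` be the vector of
choice probabilities and `e π` the 0/1 vector of the pairs that `π` ranks first. Rationalizability
says that `p` is a convex combination of the `e π`. If it is not, Hahn–Banach gives weights `w`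
with `w ⬝ᵥ e π < w ⬝ᵥ p` for every `π`. Since `p` and each `e π` sum to one on every menu, `w`
may be shifted to be nonnegative, and rounding `N • w` up to natural numbers turns it into a
list of pairs, with repetitions, that violates the axiom once `N` is large.
-/

open MeasureTheory

attribute [local instance] Classical.propDecidable

/-- The space of strict total orders on `X`: irreflexive, transitive relations under
which any two distinct elements are comparable. -/
def StrictTotalOrders (X : Type*) : Type _ :=
  {r : X → X → Prop //
    (∀ a, ¬ r a a) ∧ (∀ a b c, r a b → r b c → r a c) ∧ ∀ a b, a ≠ b → r a b ∨ r b a}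

/-- The σ-algebra on the space of strict total orders generated by the events fixing
the relative order of finitely many distinct elements. -/
instance ordersMeasurableSpace (X : Type*) : MeasurableSpace (StrictTotalOrders X) :=
  MeasurableSpace.generateFrom
    {s | ∃ l : List X, l.Nodup ∧ s = {π : StrictTotalOrders X | l.Chain' π.1}}

/-- `P` is a stochastic choice dataset on the collection `𝒜` of (finite, nonempty)
menus: choice probabilities are nonnegative and sum to one over each menu. -/
def IsStochasticDataset {X : Type*} (𝒜 : Set (Finset X)) (P : Finset X → X → ℝ) : Prop :=
  ∀ A ∈ 𝒜, A.Nonempty ∧ (∀ x ∈ A, 0 ≤ P A x) ∧ ∑ x ∈ A, P A x = 1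

/-- `P` is rationalizable: there is a probability measure `ν` over strict total orders
of `X` such that the probability that `x` beats every other element of `A` equals
`P A x` for every menu `A ∈ 𝒜` and `x ∈ A`. -/
def StochRationalizable {X : Type*} (𝒜 : Set (Finset X)) (P : Finset X → X → ℝ) : Prop :=
  ∃ ν : Measure (StrictTotalOrders X), IsProbabilityMeasure ν ∧
    ∀ A ∈ 𝒜, ∀ x ∈ A,
      ν {π : StrictTotalOrders X | ∀ y ∈ A, y ≠ x → π.1 x y} = ENNReal.ofReal (P A x)

/-- The Axiom of Revealed Stochastic Preference: for every finite sequence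
`(A₁,x₁),…,(A_n,x_n)` from the domain of `P` (repetitions allowed),
`∑ᵢ P(Aᵢ,xᵢ)` is at most the maximum, over strict total orders, of the number of
indices `i` such that `xᵢ` is top-ranked in `Aᵢ`. -/
def ARSP {X : Type*} (𝒜 : Set (Finset X)) (P : Finset X → X → ℝ) : Prop :=
  ∀ (n : ℕ) (A : Fin n → Finset X) (x : Fin n → X),
    (∀ i, A i ∈ 𝒜 ∧ x i ∈ A i) →
    ∃ π : StrictTotalOrders X,
      ∑ i, P (A i) (x i) ≤
        ((Finset.univ.filter fun i : Fin n => ∀ y ∈ A i, y ≠ x i → π.1 (x i) y).card : ℝ)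

namespace StrictTotalOrders

variable {X : Type*}

instance : Nonempty (StrictTotalOrders X) :=
  ⟨⟨WellOrderingRel, irrefl_of _, fun _ _ _ => trans_of _,
    fun a b hab => (trichotomous_of WellOrderingRel a b).imp_right (·.resolve_left hab)⟩⟩

noncomputable instance [Fintype X] : Fintype (StrictTotalOrders X) := Subtype.fintype _

instance (π : StrictTotalOrders X) : IsStrictTotalOrder X π.1 where
  irrefl := π.2.1
  trans := π.2.2.1
  trichotomous a b hab hba := by_contra fun hne => (π.2.2.2 a b hne).elim hab hba

def ranksFirst (A : Finset X) (x : X) : Set (StrictTotalOrders X) :=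
  {π | ∀ y ∈ A, y ≠ x → π.1 x y}

theorem measurableSet_setOf_rel {x y : X} (hxy : x ≠ y) :
    MeasurableSet {π : StrictTotalOrders X | π.1 x y} :=
  MeasurableSpace.measurableSet_generateFrom
    ⟨[x, y], by simpa using hxy, Set.ext fun _ => List.isChain_pair.symm⟩

theorem measurableSet_ranksFirst (A : Finset X) (x : X) : MeasurableSet (ranksFirst A x) := by
  simp only [ranksFirst, Set.ofPred_forall]
  exact Finset.measurableSet_biInter _ fun y _ =>
    .iInter fun hyx => measurableSet_setOf_rel (Ne.symm hyx)

theorem exists_mem_ranksFirst (π : StrictTotalOrders X) {A : Finset X} (hA : A.Nonempty) :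
    ∃ x ∈ A, π ∈ ranksFirst A x := by
  let := linearOrderOfSTO π.1
  exact ⟨A.min' hA, A.min'_mem hA, fun y hy hne => (A.min'_le y hy).lt_of_ne hne.symm⟩

theorem eq_of_mem_ranksFirst {π : StrictTotalOrders X} {A : Finset X} {x x' : X} (hx : x ∈ A)
    (hx' : x' ∈ A) (h : π ∈ ranksFirst A x) (h' : π ∈ ranksFirst A x') : x = x' := by
  by_contra hne
  exact π.2.1 x (π.2.2.1 _ _ _ (h x' hx' (Ne.symm hne)) (h' x hx hne))

theorem sum_indicator_ranksFirst (π : StrictTotalOrders X) {A : Finset X} (hA : A.Nonempty) :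
    ∑ x ∈ A, (ranksFirst A x).indicator (1 : StrictTotalOrders X → ℝ) π = 1 := by
  obtain ⟨x, hx, hπx⟩ := exists_mem_ranksFirst π hA
  rw [Finset.sum_eq_single_of_mem x hx fun y hy hyx =>
    Set.indicator_of_notMem (fun hπy => hyx (eq_of_mem_ranksFirst hy hx hπy hπx)) _]
  exact Set.indicator_of_mem hπx _

end StrictTotalOrders

open scoped Finset in
theorem exists_sum_measureReal_le_card_filter_mem {Ω ι : Type*} [MeasurableSpace Ω]
    {μ : Measure Ω} [IsProbabilityMeasure μ] [Fintype ι] {S : ι → Set Ω}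
    (hS : ∀ i, MeasurableSet (S i)) : ∃ ω, ∑ i, μ.real (S i) ≤ #{i | ω ∈ S i} := by
  have hint : ∀ i, Integrable ((S i).indicator (1 : Ω → ℝ)) μ := fun i =>
    (integrable_const 1).indicator (hS i)
  obtain ⟨ω, hω⟩ := exists_integral_le (integrable_finsetSum _ fun i _ => hint i)
  refine ⟨ω, ?_⟩
  calc ∑ i, μ.real (S i) = ∫ ω, ∑ i, (S i).indicator 1 ω ∂μ := by
        rw [integral_finsetSum _ fun i _ => hint i]
        exact Finset.sum_congr rfl fun i _ => (integral_indicator_one (hS i)).symm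
    _ ≤ ∑ i, (S i).indicator 1 ω := hω
    _ = #{i | ω ∈ S i} := by simp [Set.indicator_apply]

section Separation

variable {ι κ : Type*} [Fintype ι] {p : ι → ℝ} {e : κ → ι → ℝ}

theorem mem_convexHull_range_of_forall_exists_dotProduct_le [Finite κ]
    (h : ∀ w : ι → ℝ, ∃ k, w ⬝ᵥ p ≤ w ⬝ᵥ e k) : p ∈ convexHull ℝ (Set.range e) := by
  by_contra hp
  obtain ⟨f, u, hfe, hfp⟩ := geometric_hahn_banach_closed_point (convex_convexHull ℝ _)
    ((Set.finite_range e).isClosed_convexHull (𝕜 := ℝ)) hp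
  let w : ι → ℝ := fun i => f fun j => if i = j then 1 else 0
  have hf : ∀ v, f v = w ⬝ᵥ v := fun v => by
    rw [dotProduct_comm]; exact f.toLinearMap.pi_apply_eq_sum_univ v
  obtain ⟨k, hk⟩ := h w
  have hek := hfe (e k) (subset_convexHull ℝ _ ⟨k, rfl⟩)
  rw [hf] at hek hfp
  linarith

theorem exists_dotProduct_le_of_forall_nonneg (hsum : ∀ k, ∑ i, e k i = ∑ i, p i)
    (h : ∀ μ : ι → ℝ, 0 ≤ μ → ∃ k, μ ⬝ᵥ p ≤ μ ⬝ᵥ e k) (w : ι → ℝ) :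
    ∃ k, w ⬝ᵥ p ≤ w ⬝ᵥ e k := by
  -- Adding `C • 1` to `w` adds `C * ∑ i, p i` to both sides.
  set C := ∑ i, |w i|
  obtain ⟨k, hk⟩ := h (w + C • 1) fun i => by
    have := Finset.single_le_sum (fun j _ => abs_nonneg (w j)) (Finset.mem_univ i)
    simp only [Pi.zero_apply, Pi.add_apply, Pi.smul_apply, Pi.one_apply, smul_eq_mul, mul_one]
    linarith [neg_abs_le (w i)]
  refine ⟨k, ?_⟩
  simpa [add_dotProduct, smul_dotProduct, one_dotProduct, hsum k] using hk

theorem exists_dotProduct_le_of_forall_natCast [Finite κ] [Nonempty κ] (hp : 0 ≤ p)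
    (he : ∀ k, 0 ≤ e k)
    (h : ∀ m : ι → ℕ, ∃ k, (fun i => (m i : ℝ)) ⬝ᵥ p ≤ (fun i => (m i : ℝ)) ⬝ᵥ e k)
    {μ : ι → ℝ} (hμ : 0 ≤ μ) : ∃ k, μ ⬝ᵥ p ≤ μ ⬝ᵥ e k := by
  obtain ⟨k₀, hk₀⟩ := Finite.exists_max fun k => μ ⬝ᵥ e k
  obtain ⟨k₁, hk₁⟩ := Finite.exists_max fun k => ∑ i, e k i
  refine ⟨k₀, le_of_forall_pos_le_add fun ε hε => ?_⟩
  obtain ⟨N, hN⟩ := exists_nat_gt ((∑ i, e k₁ i) / ε)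
  have hN0 : (0 : ℝ) < N :=
    (div_nonneg (Finset.sum_nonneg fun i _ => he k₁ i) hε.le).trans_lt hN
  let m : ι → ℕ := fun i => ⌈N * μ i⌉₊
  have hm_ge : (N : ℝ) • μ ≤ fun i => (m i : ℝ) := fun i => Nat.le_ceil _
  have hm_le : (fun i => (m i : ℝ)) ≤ (N : ℝ) • μ + 1 := fun i =>
    (Nat.ceil_lt_add_one (mul_nonneg hN0.le (hμ i))).le
  obtain ⟨k, hk⟩ := h m
  have key : (N : ℝ) * (μ ⬝ᵥ p) < N * (μ ⬝ᵥ e k₀ + ε) := calc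
    (N : ℝ) * (μ ⬝ᵥ p) = ((N : ℝ) • μ) ⬝ᵥ p := by rw [smul_dotProduct, smul_eq_mul]
    _ ≤ (fun i => (m i : ℝ)) ⬝ᵥ p := dotProduct_le_dotProduct_of_nonneg_right hm_ge hp
    _ ≤ (fun i => (m i : ℝ)) ⬝ᵥ e k := hk
    _ ≤ ((N : ℝ) • μ + 1) ⬝ᵥ e k := dotProduct_le_dotProduct_of_nonneg_right hm_le (he k)
    _ = N * (μ ⬝ᵥ e k) + ∑ i, e k i := by
      rw [add_dotProduct, smul_dotProduct, one_dotProduct, smul_eq_mul]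
    _ ≤ N * (μ ⬝ᵥ e k₀) + ∑ i, e k₁ i := add_le_add (by gcongr; exact hk₀ k) (hk₁ k)
    _ < N * (μ ⬝ᵥ e k₀ + ε) := by
      rw [mul_add]; gcongr; linarith [(div_lt_iff₀ hε).1 hN]
  exact (lt_of_mul_lt_mul_left key hN0.le).le

end Separation

theorem exists_isProbabilityMeasure_of_mem_convexHull {ι Ω : Type*} [Fintype ι]
    [MeasurableSpace Ω] {E : ι → Set Ω} (hE : ∀ i, MeasurableSet (E i)) {p : ι → ℝ}
    (hp : p ∈ convexHull ℝ (Set.range fun ω i => (E i).indicator 1 ω)) :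
    ∃ ν : Measure Ω, IsProbabilityMeasure ν ∧ ∀ i, ν (E i) = ENNReal.ofReal (p i) := by
  obtain ⟨J, _, w, z, hw0, hw1, hz, rfl⟩ := mem_convexHull_iff_exists_fintype.1 hp
  choose σ hσ using hz
  refine ⟨∑ j, ENNReal.ofReal (w j) • Measure.dirac (σ j), ⟨?_⟩, fun i => ?_⟩
  · simp [← ENNReal.ofReal_sum_of_nonneg fun j _ => hw0 j, hw1]
  · simp only [Measure.coe_finsetSum, Measure.coe_smul, Finset.sum_apply, Pi.smul_apply,
      Measure.dirac_apply' _ (hE i), smul_eq_mul, ← hσ]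
    rw [ENNReal.ofReal_sum_of_nonneg fun j _ =>
      mul_nonneg (hw0 j) (Set.indicator_nonneg (by simp) _)]
    refine Finset.sum_congr rfl fun j _ => ?_
    by_cases hj : σ j ∈ E i <;> simp [hj]

section StochasticChoice

open StrictTotalOrders

variable {X : Type*} {𝒜 : Set (Finset X)} {P : Finset X → X → ℝ}

theorem StochRationalizable.arsp (h : StochRationalizable 𝒜 P) : ARSP 𝒜 P := by
  obtain ⟨ν, hν, hνP⟩ := h
  intro n A x hAx
  obtain ⟨π, hπ⟩ := exists_sum_measureReal_le_card_filter_mem (μ := ν)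
    fun i => measurableSet_ranksFirst (A i) (x i)
  refine ⟨π, le_trans (Finset.sum_le_sum fun i _ => ?_) (hπ.trans_eq (by congr!))⟩
  rw [measureReal_def, ranksFirst, hνP _ (hAx i).1 _ (hAx i).2, ENNReal.toReal_ofReal']
  exact le_max_left _ _

theorem ARSP.exists_sum_mul_le (h : ARSP 𝒜 P) {ι : Type*} [Fintype ι] (A : ι → Finset X)
    (x : ι → X) (hAx : ∀ i, A i ∈ 𝒜 ∧ x i ∈ A i) (m : ι → ℕ) :
    ∃ π : StrictTotalOrders X, ∑ i, (m i : ℝ) * P (A i) (x i) ≤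
      ∑ i, (m i : ℝ) * (ranksFirst (A i) (x i)).indicator 1 π := by
  -- Apply the axiom to the list in which the pair `(A i, x i)` occurs `m i` times.
  let e := Fintype.equivFin ((i : ι) × Fin (m i))
  obtain ⟨π, hπ⟩ := h _ (fun j => A (e.symm j).1) (fun j => x (e.symm j).1) fun j => hAx _
  have hsum : ∀ g : ι → ℝ, ∑ j, g (e.symm j).1 = ∑ i, (m i : ℝ) * g i := fun g =>
    (e.symm.sum_comp (g ∘ Sigma.fst)).trans (by simp [Fintype.sum_sigma])
  refine ⟨π, ?_⟩
  rw [← hsum, ← hsum]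
  convert hπ using 1
  rw [Finset.natCast_card_filter]
  simp [ranksFirst, Set.indicator_apply]

theorem sum_sigma_eq_card [Fintype X] {f : Finset X → X → ℝ}
    (hf : ∀ A ∈ 𝒜, ∑ x ∈ A, f A x = 1) :
    ∑ d : (A : 𝒜) × (A : Finset X), f d.1 d.2 = Fintype.card 𝒜 := by
  rw [Fintype.sum_sigma, Fintype.card_eq_sum_ones, Nat.cast_sum, Nat.cast_one]
  exact Finset.sum_congr rfl fun A _ => (Finset.sum_coe_sort _ (f A)).trans (hf A A.2)

theorem StochRationalizable.of_arsp [Fintype X] (hP : IsStochasticDataset 𝒜 P) (h : ARSP 𝒜 P) :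
    StochRationalizable 𝒜 P := by
  let p : (A : 𝒜) × (A : Finset X) → ℝ := fun d => P d.1 d.2
  let e : StrictTotalOrders X → (A : 𝒜) × (A : Finset X) → ℝ := fun π d =>
    (ranksFirst (d.1 : Finset X) (d.2 : X)).indicator 1 π
  have hp : 0 ≤ p := fun d => (hP _ d.1.2).2.1 _ d.2.2
  have he : ∀ π, 0 ≤ e π := fun π d => Set.indicator_nonneg (fun _ _ => zero_le_one) π
  have hsum : ∀ π, ∑ d, e π d = ∑ d, p d := fun π => by
    rw [sum_sigma_eq_card fun A hA => sum_indicator_ranksFirst π (hP A hA).1,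
      sum_sigma_eq_card fun A hA => (hP A hA).2.2]
  have hnat := h.exists_sum_mul_le (fun d : (A : 𝒜) × (A : Finset X) => d.1) (fun d => d.2)
    fun d => ⟨d.1.2, d.2.2⟩
  obtain ⟨ν, hν, hνP⟩ := exists_isProbabilityMeasure_of_mem_convexHull
    (fun d => measurableSet_ranksFirst _ _)
    (mem_convexHull_range_of_forall_exists_dotProduct_le (e := e)
      (exists_dotProduct_le_of_forall_nonneg hsum fun μ hμ =>
        exists_dotProduct_le_of_forall_natCast hp he hnat hμ))
  exact ⟨ν, hν, fun A hA x hx => hνP ⟨⟨A, hA⟩, x, hx⟩⟩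

end StochasticChoice

/-- McFadden–Richter theorem for a finite set of alternatives: a stochastic choice
dataset is rationalizable by a probability distribution over the strict total orders
of `X` if and only if it satisfies the Axiom of Revealed Stochastic Preference. -/
theorem stochastic_rationalizability_finite {X : Type*} [Fintype X]
    (𝒜 : Set (Finset X)) (P : Finset X → X → ℝ) (hP : IsStochasticDataset 𝒜 P) :
    StochRationalizable 𝒜 P ↔ ARSP 𝒜 P :=
  ⟨StochRationalizable.arsp, StochRationalizable.of_arsp hP⟩
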